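/- arXiv:1104.4252 — 3 statements merged into one kernel-verified Lean document; each statement's English description precedes it below -/
import Mathlib

section
/- (Relation between skew and Helstrom information in 2-dimensional mixed states.) With ρ(θ) = w(θ)ρ₁ + (1−w(θ))ρ₂ as above, I_WY(θ) = α_w(θ)·I_H(θ) + β_w(θ), where α_w = 2/(1 + 2√(w(1−w))), β_w = −((1−2√(w(1−w)))/(1+2√(w(1−w))))·(w')²/(w(1−w)), and I_H(θ) = (w')²/(w(1−w)) + (2w−1)²·I_{H1}(θ) with I_{H1} = 2·trace((ρ₁')²) and I_WY1 = 2·I_{H1}. -/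
lemma sq_two_mul_sub_one_eq_of_sq_eq {w s : ℝ} (hs : s ^ 2 = w * (1 - w)) :
    (2 * w - 1) ^ 2 = (1 - 2 * s) * (1 + 2 * s) := by
  linear_combination 4 * hs

lemma add_mul_two_mul_eq_div_mul_add {w s F I : ℝ} (hs : s ^ 2 = w * (1 - w))
    (hden : 1 + 2 * s ≠ 0) :
    F + (1 - 2 * s) * (2 * I)
      = 2 / (1 + 2 * s) * (F + (2 * w - 1) ^ 2 * I) + -((1 - 2 * s) / (1 + 2 * s)) * F := by
  rw [sq_two_mul_sub_one_eq_of_sq_eq hs]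
  field_simp
  ring

theorem stmt11_general (w w' IH1 : ℝ) (hw0 : 0 < w) (hw1 : w < 1) :
    let IWY1 : ℝ := 2 * IH1
    let IH : ℝ := w' ^ 2 / (w * (1 - w)) + (2 * w - 1) ^ 2 * IH1
    let IWY : ℝ := w' ^ 2 / (w * (1 - w))
      + (1 - 2 * Real.sqrt (w * (1 - w))) * IWY1
    let α : ℝ := 2 / (1 + 2 * Real.sqrt (w * (1 - w)))
    let β : ℝ := -((1 - 2 * Real.sqrt (w * (1 - w)))
      / (1 + 2 * Real.sqrt (w * (1 - w)))) * (w' ^ 2 / (w * (1 - w)))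
    IWY = α * IH + β := by
  have hsq : Real.sqrt (w * (1 - w)) ^ 2 = w * (1 - w) :=
    Real.sq_sqrt (mul_nonneg hw0.le (sub_nonneg.mpr hw1.le))
  have hden : 1 + 2 * Real.sqrt (w * (1 - w)) ≠ 0 := by positivity
  exact add_mul_two_mul_eq_div_mul_add hsq hden

theorem stmt11 (w w' IH1 : ℝ) (hw0 : 0 < w) (hw1 : w < 1) (hwhalf : w ≠ 1 / 2) :
    let IWY1 : ℝ := 2 * IH1
    let IH : ℝ := w' ^ 2 / (w * (1 - w)) + (2 * w - 1) ^ 2 * IH1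
    let IWY : ℝ := w' ^ 2 / (w * (1 - w))
      + (1 - 2 * Real.sqrt (w * (1 - w))) * IWY1
    let α : ℝ := 2 / (1 + 2 * Real.sqrt (w * (1 - w)))
    let β : ℝ := -((1 - 2 * Real.sqrt (w * (1 - w)))
      / (1 + 2 * Real.sqrt (w * (1 - w)))) * (w' ^ 2 / (w * (1 - w)))
    IWY = α * IH + β :=
  stmt11_general w w' IH1 hw0 hw1
end

section
/- (Sufficient condition for information loss in mixing.) In the two-dimensional mixed state ρ = wρ₁ + (1−w)ρ₂ with θ-dependent w, if I_WY1(θ) > (w')²/(2w²(1−w)²), then I_H(θ) < I_{H1}(θ) and I_WY(θ) < I_WY1(θ), where I_H = (w')²/(w(1−w)) + (2w−1)²·I_{H1}, I_WY = (w')²/(w(1−w)) + (1−2√(w(1−w)))·I_WY1, and I_WY1 = 2·I_{H1}. -/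
theorem stmt14 (w w' IH1 : ℝ) (hw0 : 0 < w) (hw1 : w < 1) (hwhalf : w ≠ 1 / 2)
    (hIH1 : 0 ≤ IH1)
    (hcond : 2 * IH1 > w' ^ 2 / (2 * w ^ 2 * (1 - w) ^ 2)) :
    let IWY1 : ℝ := 2 * IH1
    let IH : ℝ := w' ^ 2 / (w * (1 - w)) + (2 * w - 1) ^ 2 * IH1
    let IWY : ℝ := w' ^ 2 / (w * (1 - w))
      + (1 - 2 * Real.sqrt (w * (1 - w))) * IWY1
    IH < IH1 ∧ IWY < IWY1 := by
  intro IWY1 IH IWY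
  have hs0 : 0 < w * (1 - w) := mul_pos hw0 (by linarith)
  have hkey : w' ^ 2 < 4 * (w * (1 - w)) ^ 2 * IH1 := by
    rw [gt_iff_lt, div_lt_iff₀ (by nlinarith [hs0] : (0:ℝ) < 2 * w ^ 2 * (1 - w) ^ 2)] at hcond
    nlinarith [hcond]
  have h1 : w' ^ 2 / (w * (1 - w)) < 4 * (w * (1 - w)) * IH1 := by
    rw [div_lt_iff₀ hs0]; nlinarith
  have hsqnn := Real.sqrt_nonneg (w * (1 - w))
  have hsq : Real.sqrt (w * (1 - w)) ^ 2 = w * (1 - w) := Real.sq_sqrt hs0.le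
  have h14 : w * (1 - w) ≤ 1 / 4 := by nlinarith [sq_nonneg (2 * w - 1)]
  have hge : 2 * (w * (1 - w)) ≤ Real.sqrt (w * (1 - w)) := by
    nlinarith [hsq, hsqnn]
  constructor
  · show w' ^ 2 / (w * (1 - w)) + (2 * w - 1) ^ 2 * IH1 < IH1
    nlinarith [h1]
  · show w' ^ 2 / (w * (1 - w))
      + (1 - 2 * Real.sqrt (w * (1 - w))) * (2 * IH1) < 2 * IH1
    nlinarith [h1, mul_le_mul_of_nonneg_right hge hIH1]
end

section
/- (Proposition 2.) In the spectral mixed state ρ = Σ_l λ_lρ_l, the difference between skew and Helstrom information is I_WY − I_H = γ, where γ = −4·Σ_l Σ_{k≠l} [ (λ_l − √(λ_lλ_k))·trace(ρ_l'ρ_k') + Σ_z (λ_l(λ_k−λ_l)λ_z/(λ_l+λ_k)²)·trace(ρ_lρ_k'ρ_z') ], with I_WY and I_H given by their spectral formulas. -/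
/-! Differentiating `∑ l, ρ l = 1` gives `∑ l, ρ l' = 0`, so each diagonal term `trace (ρ l' * ρ l')`
equals `-∑_{k ≠ l} trace (ρ l' * ρ k')`. Substituting this into the skew-information formula
turns both information quantities into sums over pairs `k ≠ l`, and the difference is then
read off termwise. -/

open Matrix Finset

theorem Matrix.sum_derivs_eq_zero_of_sum_eq_const {ι m p 𝕜 F : Type*} [NontriviallyNormedField 𝕜]
    [NormedAddCommGroup F] [NormedSpace 𝕜 F] {s : Finset ι} {ρ : ι → 𝕜 → Matrix m p F}
    {D : ι → Matrix m p F} {C : Matrix m p F} {x : 𝕜} (hsum : ∀ t, ∑ l ∈ s, ρ l t = C)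
    (hderiv : ∀ l i j, HasDerivAt (fun t => ρ l t i j) (D l i j) x) :
    ∑ l ∈ s, D l = 0 := by
  ext i j
  have hconst : (fun t => ∑ l ∈ s, ρ l t i j) = fun _ => C i j := by
    funext t
    rw [← Matrix.sum_apply, hsum t]
  have hsum_deriv : HasDerivAt (fun t => ∑ l ∈ s, ρ l t i j) (∑ l ∈ s, D l i j) x :=
    HasDerivAt.fun_sum fun l _ => hderiv l i j
  rw [hconst] at hsum_deriv
  simpa [Matrix.sum_apply] using hsum_deriv.unique (hasDerivAt_const x (C i j))

theorem Matrix.trace_mul_self_eq_neg_sum_erase {ι m R : Type*} [Fintype ι] [DecidableEq ι]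
    [Fintype m] [Ring R] {D : ι → Matrix m m R} (hD : ∑ k, D k = 0) (l : ι) :
    trace (D l * D l) = -∑ k ∈ univ.erase l, trace (D l * D k) := by
  have hzero : ∑ k, trace (D l * D k) = 0 := by
    rw [← trace_sum, ← mul_sum, hD, mul_zero, trace_zero]
  rw [← add_sum_erase univ _ (mem_univ l)] at hzero
  exact eq_neg_of_add_eq_zero_left hzero

theorem Matrix.sum_mul_trace_mul_self_eq {ι m R : Type*} [Fintype ι] [DecidableEq ι]
    [Fintype m] [CommRing R] {D : ι → Matrix m m R} (hD : ∑ k, D k = 0) (w : ι → R) :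
    ∑ l, w l * trace (D l * D l) = -∑ l, ∑ k ∈ univ.erase l, w l * trace (D l * D k) := by
  simp only [trace_mul_self_eq_neg_sum_erase hD, mul_neg, mul_sum, sum_neg_distrib]

theorem stmt18_general {n : ℕ} (lam : Fin n → ℝ → ℝ) (lam' : Fin n → ℝ)
    (ρ : Fin n → ℝ → Matrix (Fin n) (Fin n) ℂ)
    (D : Fin n → Matrix (Fin n) (Fin n) ℂ) (θ : ℝ)
    (hsumI : ∀ t, ∑ l, ρ l t = 1)
    (hdρ : ∀ l i j, HasDerivAt (fun t => ρ l t i j) (D l i j) θ) :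
    let IWY : ℂ :=
      ∑ l, (lam l θ : ℂ) * (4 * Matrix.trace (D l * D l))
        + ∑ l, ((lam' l ^ 2 / lam l θ : ℝ) : ℂ)
        + 4 * ∑ l, ∑ k ∈ Finset.univ.erase l,
            (Real.sqrt (lam l θ * lam k θ) : ℂ) * Matrix.trace (D l * D k)
    let IH : ℂ :=
      ∑ l, ((lam' l ^ 2 / lam l θ : ℝ) : ℂ)
        + ∑ l, ∑ k ∈ Finset.univ.erase l, ∑ z,
            ((4 * lam l θ * (lam k θ - lam l θ) * lam z θ
              / (lam l θ + lam k θ) ^ 2 : ℝ) : ℂ)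
            * Matrix.trace (ρ l θ * D k * D z)
    let γ : ℂ :=
      -4 * ∑ l, ∑ k ∈ Finset.univ.erase l,
        (((lam l θ - Real.sqrt (lam l θ * lam k θ) : ℝ) : ℂ)
            * Matrix.trace (D l * D k)
          + ∑ z, ((lam l θ * (lam k θ - lam l θ) * lam z θ
              / (lam l θ + lam k θ) ^ 2 : ℝ) : ℂ)
            * Matrix.trace (ρ l θ * D k * D z))
    IWY - IH = γ := by
  intro IWY IH γ
  have hD : ∑ l, D l = 0 := sum_derivs_eq_zero_of_sum_eq_const hsumI hdρ
  have hdiag : ∑ l, (lam l θ : ℂ) * (4 * trace (D l * D l))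
      = -4 * ∑ l, ∑ k ∈ univ.erase l, (lam l θ : ℂ) * trace (D l * D k) := by
    simp only [mul_left_comm _ (4 : ℂ), ← mul_sum, sum_mul_trace_mul_self_eq hD]
    ring
  have hIH : ∑ l, ∑ k ∈ univ.erase l, ∑ z, ((4 * lam l θ * (lam k θ - lam l θ) * lam z θ
        / (lam l θ + lam k θ) ^ 2 : ℝ) : ℂ) * trace (ρ l θ * D k * D z)
      = 4 * ∑ l, ∑ k ∈ univ.erase l, ∑ z, ((lam l θ * (lam k θ - lam l θ) * lam z θ
        / (lam l θ + lam k θ) ^ 2 : ℝ) : ℂ) * trace (ρ l θ * D k * D z) := by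
    simp only [mul_sum]
    refine sum_congr rfl fun l _ => sum_congr rfl fun k _ => sum_congr rfl fun z _ => ?_
    push_cast
    ring
  simp only [IWY, IH, γ, hdiag, hIH, sum_add_distrib, Complex.ofReal_sub, sub_mul,
    sum_sub_distrib]
  ring

theorem stmt18 {n : ℕ} (lam : Fin n → ℝ → ℝ) (lam' : Fin n → ℝ)
    (ρ : Fin n → ℝ → Matrix (Fin n) (Fin n) ℂ)
    (D : Fin n → Matrix (Fin n) (Fin n) ℂ) (θ : ℝ)
    (hpos : ∀ l t, 0 < lam l t)
    (hsum1 : ∀ t, ∑ l, lam l t = 1)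
    (hherm : ∀ l t, (ρ l t).IsHermitian)
    (horth : ∀ l k t, ρ l t * ρ k t = if l = k then ρ l t else 0)
    (hsumI : ∀ t, ∑ l, ρ l t = 1)
    (hdlam : ∀ l, HasDerivAt (lam l) (lam' l) θ)
    (hdρ : ∀ l i j, HasDerivAt (fun t => ρ l t i j) (D l i j) θ) :
    let IWY : ℂ :=
      ∑ l, (lam l θ : ℂ) * (4 * Matrix.trace (D l * D l))
        + ∑ l, ((lam' l ^ 2 / lam l θ : ℝ) : ℂ)
        + 4 * ∑ l, ∑ k ∈ Finset.univ.erase l,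
            (Real.sqrt (lam l θ * lam k θ) : ℂ) * Matrix.trace (D l * D k)
    let IH : ℂ :=
      ∑ l, ((lam' l ^ 2 / lam l θ : ℝ) : ℂ)
        + ∑ l, ∑ k ∈ Finset.univ.erase l, ∑ z,
            ((4 * lam l θ * (lam k θ - lam l θ) * lam z θ
              / (lam l θ + lam k θ) ^ 2 : ℝ) : ℂ)
            * Matrix.trace (ρ l θ * D k * D z)
    let γ : ℂ :=
      -4 * ∑ l, ∑ k ∈ Finset.univ.erase l,
        (((lam l θ - Real.sqrt (lam l θ * lam k θ) : ℝ) : ℂ)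
            * Matrix.trace (D l * D k)
          + ∑ z, ((lam l θ * (lam k θ - lam l θ) * lam z θ
              / (lam l θ + lam k θ) ^ 2 : ℝ) : ℂ)
            * Matrix.trace (ρ l θ * D k * D z))
    IWY - IH = γ :=
  stmt18_general lam lam' ρ D θ hsumI hdρ
end
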